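/- Under the MNL model with outside option at θ ∈ ℝ^d, for any nonempty S ⊆ [N] the Fisher information matrix satisfies I_θ(S) ⪰ p(0|S,θ) · Ā_θ(S) in the Loewner order, and consequently ā_θ(S) ā_θ(S)ᵀ ⪯ ((1 − p(0|S,θ))/p(0|S,θ)) · I_θ(S). -/

import Mathlib

open Matrix

noncomputable section

/-- MNL choice probability with outside option. -/
def mnlPOut {N d : ℕ} (a : Fin N → Fin d → ℝ) (θ : Fin d → ℝ) (S : Finset (Fin N)) (i : Fin N) :
    ℝ :=
  Real.exp (a i ⬝ᵥ θ) / (1 + ∑ j ∈ S, Real.exp (a j ⬝ᵥ θ))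

/-- Probability of the outside option. -/
def p0Out {N d : ℕ} (a : Fin N → Fin d → ℝ) (θ : Fin d → ℝ) (S : Finset (Fin N)) : ℝ :=
  1 / (1 + ∑ j ∈ S, Real.exp (a j ⬝ᵥ θ))

/-- Mean feature vector under the outside-option MNL choice probabilities. -/
def abarOut {N d : ℕ} (a : Fin N → Fin d → ℝ) (θ : Fin d → ℝ) (S : Finset (Fin N)) :
    Fin d → ℝ :=
  ∑ i ∈ S, mnlPOut a θ S i • a i

/-- Uncentered second-moment matrix under the outside-option MNL model. -/
def AbarOut {N d : ℕ} (a : Fin N → Fin d → ℝ) (θ : Fin d → ℝ) (S : Finset (Fin N)) :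
    Matrix (Fin d) (Fin d) ℝ :=
  ∑ i ∈ S, mnlPOut a θ S i • vecMulVec (a i) (a i)

/-- Fisher information matrix under the outside-option MNL model. -/
def fisherOut {N d : ℕ} (a : Fin N → Fin d → ℝ) (θ : Fin d → ℝ) (S : Finset (Fin N)) :
    Matrix (Fin d) (Fin d) ℝ :=
  AbarOut a θ S - vecMulVec (abarOut a θ S) (abarOut a θ S)

/-!
The probabilities `p i = p(i|S,θ)` are nonnegative weights of total mass `1 - p₀`, so
`I - p₀ Ā = (∑ p) Ā - ā āᵀ`, whose quadratic form at `x` is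
`(∑ p i) (∑ p i (aᵢ ⬝ x)²) - (∑ p i (aᵢ ⬝ x))² ≥ 0` by the weighted Cauchy–Schwarz inequality.
Since `ā āᵀ = Ā - I`, the second matrix is `p₀⁻¹ (I - p₀ Ā)`.
-/

theorem Finset.sq_sum_mul_le_sum_mul_sum_mul_sq {ι : Type*} (s : Finset ι) {w : ι → ℝ}
    (hw : ∀ i ∈ s, 0 ≤ w i) (u : ι → ℝ) :
    (∑ i ∈ s, w i * u i) ^ 2 ≤ (∑ i ∈ s, w i) * ∑ i ∈ s, w i * u i ^ 2 :=
  sum_sq_le_sum_mul_sum_of_sq_le_mul s hw (fun i hi => mul_nonneg (hw i hi) (sq_nonneg _))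
    fun i _ => (by ring : (w i * u i) ^ 2 = w i * (w i * u i ^ 2)).le

theorem Matrix.dotProduct_vecMulVec_self_mulVec {n : Type*} [Fintype n] (u x : n → ℝ) :
    x ⬝ᵥ (vecMulVec u u *ᵥ x) = (u ⬝ᵥ x) ^ 2 := by
  rw [vecMulVec_mulVec, dotProduct_comm u x]
  simp [dotProduct_smul, sq]

theorem Matrix.posSemidef_sum_smul_sum_vecMulVec_sub {ι n : Type*} [Fintype n] (s : Finset ι)
    {w : ι → ℝ} (hw : ∀ i ∈ s, 0 ≤ w i) (v : ι → n → ℝ) :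
    ((∑ i ∈ s, w i) • ∑ i ∈ s, w i • vecMulVec (v i) (v i) -
      vecMulVec (∑ i ∈ s, w i • v i) (∑ i ∈ s, w i • v i)).PosSemidef := by
  have hvv (u : n → ℝ) : (vecMulVec u u).PosSemidef := posSemidef_vecMulVec_self_star u
  have hA : (∑ i ∈ s, w i • vecMulVec (v i) (v i)).PosSemidef :=
    posSemidef_sum s fun i hi => (hvv _).smul (hw i hi)
  refine .of_dotProduct_mulVec_nonneg
    ((hA.1.smul (IsSelfAdjoint.all _)).sub (hvv _).1) fun x => ?_
  simp only [star_trivial, sub_mulVec, smul_mulVec, sum_mulVec, dotProduct_sub, dotProduct_smul,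
    dotProduct_sum, dotProduct_vecMulVec_self_mulVec, sum_dotProduct, smul_dotProduct,
    smul_eq_mul, sub_nonneg]
  exact s.sq_sum_mul_le_sum_mul_sum_mul_sq hw _

section MNL

variable {N d : ℕ} (a : Fin N → Fin d → ℝ) (θ : Fin d → ℝ) (S : Finset (Fin N))

theorem mnlPOut_nonneg (i : Fin N) : 0 ≤ mnlPOut a θ S i := by
  unfold mnlPOut; positivity

theorem p0Out_pos : 0 < p0Out a θ S := by
  unfold p0Out; positivity

theorem sum_mnlPOut : ∑ i ∈ S, mnlPOut a θ S i = 1 - p0Out a θ S := by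
  have hD : 0 < 1 + ∑ j ∈ S, Real.exp (a j ⬝ᵥ θ) := by positivity
  simp only [mnlPOut, p0Out, ← Finset.sum_div]
  field_simp
  ring

theorem posSemidef_fisherOut_sub_smul_AbarOut :
    (fisherOut a θ S - p0Out a θ S • AbarOut a θ S).PosSemidef := by
  have h := posSemidef_sum_smul_sum_vecMulVec_sub S (fun i _ => mnlPOut_nonneg a θ S i) a
  rw [sum_mnlPOut] at h
  convert h using 1
  simp only [fisherOut, AbarOut, abarOut, sub_smul, one_smul]
  abel

theorem smul_fisherOut_sub_vecMulVec_abarOut :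
    ((1 - p0Out a θ S) / p0Out a θ S) • fisherOut a θ S -
        vecMulVec (abarOut a θ S) (abarOut a θ S) =
      (p0Out a θ S)⁻¹ • (fisherOut a θ S - p0Out a θ S • AbarOut a θ S) := by
  have hp0 := (p0Out_pos a θ S).ne'
  have hcoef : (1 - p0Out a θ S) / p0Out a θ S = (p0Out a θ S)⁻¹ - 1 := by
    field_simp
  rw [hcoef, smul_sub, smul_smul, inv_mul_cancel₀ hp0, one_smul, sub_smul, one_smul, fisherOut]
  abel

end MNL

theorem fisher_out_lower_bound_general {N d : ℕ} (a : Fin N → Fin d → ℝ) (θ : Fin d → ℝ)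
    (S : Finset (Fin N)) :
    (fisherOut a θ S - p0Out a θ S • AbarOut a θ S).PosSemidef ∧
    (((1 - p0Out a θ S) / p0Out a θ S) • fisherOut a θ S -
      vecMulVec (abarOut a θ S) (abarOut a θ S)).PosSemidef := by
  have h := posSemidef_fisherOut_sub_smul_AbarOut a θ S
  refine ⟨h, ?_⟩
  rw [smul_fisherOut_sub_vecMulVec_abarOut]
  exact h.smul (inv_nonneg.2 (p0Out_pos a θ S).le)

/-- Under the outside-option MNL model, `I_θ(S) ⪰ p(0|S,θ) Ā_θ(S)` and consequently
`ā_θ(S) ā_θ(S)ᵀ ⪯ ((1 − p(0|S,θ))/p(0|S,θ)) I_θ(S)` in the Loewner order. -/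
theorem fisher_out_lower_bound {N d : ℕ} (a : Fin N → Fin d → ℝ) (θ : Fin d → ℝ)
    (S : Finset (Fin N)) (hS : S.Nonempty) :
    (fisherOut a θ S - p0Out a θ S • AbarOut a θ S).PosSemidef ∧
    (((1 - p0Out a θ S) / p0Out a θ S) • fisherOut a θ S -
      vecMulVec (abarOut a θ S) (abarOut a θ S)).PosSemidef :=
  fisher_out_lower_bound_general a θ S

end
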